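/- arXiv:1905.00865 — 2 statements merged into one kernel-verified Lean document; each statement's English description precedes it below -/
import Mathlib

section
/- For all real numbers β₁, β₂ with 0 < β₁ < β₂, the derivative F'_{β₁,β₂}(x) = β₁ − (β₁ + x·β₂·(β₁+β₂))·exp(−x·(β₁+β₂)) vanishes at exactly one positive point x₀, and F_{β₁,β₂}(x₀) < 0; moreover F'_{β₁,β₂}(x) → β₁ as x → ∞. -/
/-- Hamilton football angle function: `F β₁ β₂ x = β₁x − 1 + (β₂x + 1) e^{−x(β₁+β₂)}`. -/
noncomputable def F (β₁ β₂ x : ℝ) : ℝ :=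
  β₁ * x - 1 + (β₂ * x + 1) * Real.exp (-x * (β₁ + β₂))

/-!
Write `F' = β₁ - G` with `G x = (β₁ + xβ₂(β₁+β₂)) e^{-x(β₁+β₂)}`. Then `G 0 = β₁`, `G` increases
up to `c = (β₂ - β₁)/(β₂(β₁+β₂)) > 0`, decreases afterwards and tends to `0`. Hence `G` takes the
value `β₁` exactly once on `(0, ∞)`, at some `x₀ > c`, and `G > β₁` on `(0, x₀)`, so `F` decreases
strictly on `[0, x₀]` from `F 0 = 0`.
-/

open Filter Set Topology

section Unimodal

variable {g : ℝ → ℝ} {a c x : ℝ}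

theorem lt_of_apply_eq_of_strictMonoOn_Icc (hmono : StrictMonoOn g (Icc a c))
    (hax : a < x) (hx : g x = g a) : c < x := by
  by_contra! hxc
  exact (hmono (left_mem_Icc.2 (hax.le.trans hxc)) ⟨hax.le, hxc⟩ hax).ne' hx

theorem apply_lt_of_strictMonoOn_Icc_of_strictAntiOn_Ici (hmono : StrictMonoOn g (Icc a c))
    (hanti : StrictAntiOn g (Ici c)) {y : ℝ} (hax : a < x) (hxy : x < y) (hy : g y = g a) :
    g a < g x := by
  rcases le_or_gt x c with hxc | hcx
  · exact hmono (left_mem_Icc.2 (hax.le.trans hxc)) ⟨hax.le, hxc⟩ hax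
  · exact hy ▸ hanti hcx.le (hcx.trans hxy).le hxy

theorem existsUnique_apply_eq_of_strictMonoOn_Icc_of_strictAntiOn_Ici {l : ℝ} (hac : a < c)
    (hmono : StrictMonoOn g (Icc a c)) (hanti : StrictAntiOn g (Ici c))
    (hcont : ContinuousOn g (Ici c)) (hlim : Tendsto g atTop (𝓝 l)) (hl : l < g a) :
    ∃! x, a < x ∧ g x = g a := by
  obtain ⟨T, hgT, hcT⟩ :=
    ((hlim.eventually_lt_const hl).and (eventually_gt_atTop c)).exists
  have hgc : g a < g c := hmono (left_mem_Icc.2 hac.le) (right_mem_Icc.2 hac.le) hac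
  obtain ⟨x, hx, hgx⟩ := intermediate_value_Icc' hcT.le (hcont.mono Icc_subset_Ici_self)
    ⟨hgT.le, hgc.le⟩
  refine ⟨x, ⟨hac.trans_le hx.1, hgx⟩, fun y ⟨hay, hgy⟩ => ?_⟩
  exact hanti.injOn (lt_of_apply_eq_of_strictMonoOn_Icc hmono hay hgy).le hx.1
    (hgy.trans hgx.symm)

end Unimodal

noncomputable def G (β₁ β₂ x : ℝ) : ℝ :=
  (β₁ + x * β₂ * (β₁ + β₂)) * Real.exp (-x * (β₁ + β₂))

theorem hasDerivAt_exp_neg_mul (s x : ℝ) :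
    HasDerivAt (fun y => Real.exp (-y * s)) (-s * Real.exp (-x * s)) x := by
  simpa [mul_comm] using ((hasDerivAt_id x).neg.mul_const s).exp

section Derivatives

variable (β₁ β₂ x : ℝ)

theorem hasDerivAt_F :
    HasDerivAt (F β₁ β₂) (β₁ - (β₁ + x * β₂ * (β₁ + β₂)) * Real.exp (-x * (β₁ + β₂))) x := by
  have hlin (b d : ℝ) : HasDerivAt (fun y => b * y + d) b x := by
    simpa using ((hasDerivAt_id x).const_mul b).add_const d
  exact ((hlin β₁ (-1)).add ((hlin β₂ 1).mul (hasDerivAt_exp_neg_mul (β₁ + β₂) x))).congr_deriv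
    (by ring)

theorem deriv_F : deriv (F β₁ β₂) x = β₁ - G β₁ β₂ x :=
  (hasDerivAt_F β₁ β₂ x).deriv

theorem hasDerivAt_G :
    HasDerivAt (G β₁ β₂)
      ((β₁ + β₂) * (β₂ - β₁ - x * β₂ * (β₁ + β₂)) * Real.exp (-x * (β₁ + β₂))) x := by
  have hlin : HasDerivAt (fun y => β₁ + y * β₂ * (β₁ + β₂)) (β₂ * (β₁ + β₂)) x := by
    simpa using (((hasDerivAt_id x).mul_const β₂).mul_const (β₁ + β₂)).const_add β₁
  exact (hlin.mul (hasDerivAt_exp_neg_mul (β₁ + β₂) x)).congr_deriv (by ring)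

end Derivatives

theorem continuous_F (β₁ β₂ : ℝ) : Continuous (F β₁ β₂) := by
  unfold F; fun_prop

theorem continuous_G (β₁ β₂ : ℝ) : Continuous (G β₁ β₂) := by
  unfold G; fun_prop

theorem F_zero (β₁ β₂ : ℝ) : F β₁ β₂ 0 = 0 := by
  simp [F]

theorem G_zero (β₁ β₂ : ℝ) : G β₁ β₂ 0 = β₁ := by
  simp [G]

theorem tendsto_G_atTop (β₁ β₂ : ℝ) (hs : 0 < β₁ + β₂) :
    Tendsto (G β₁ β₂) atTop (𝓝 0) := by
  have hmul : Tendsto (fun t => t * Real.exp (-t)) atTop (𝓝 0) := by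
    simpa using Real.tendsto_pow_mul_exp_neg_atTop_nhds_zero 1
  have hexp : Tendsto (fun t => β₁ * Real.exp (-t) + β₂ * (t * Real.exp (-t))) atTop (𝓝 0) := by
    simpa using (Real.tendsto_exp_neg_atTop_nhds_zero.const_mul β₁).add (hmul.const_mul β₂)
  refine (hexp.comp (tendsto_id.atTop_mul_const hs)).congr fun x => ?_
  simp only [Function.comp, G, id, neg_mul]
  ring

section Shape

variable {β₁ β₂ : ℝ} (hs : 0 < β₁ + β₂) (h₂ : β₁ < β₂)
include hs h₂

theorem G_strictMonoOn :
    StrictMonoOn (G β₁ β₂) (Icc 0 ((β₂ - β₁) / (β₂ * (β₁ + β₂)))) := by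
  have hpos : 0 < β₂ * (β₁ + β₂) := mul_pos (by linarith) hs
  refine strictMonoOn_of_deriv_pos (convex_Icc _ _) (continuous_G β₁ β₂).continuousOn
    fun x hx => ?_
  rw [interior_Icc] at hx
  have hlt : x * β₂ * (β₁ + β₂) < β₂ - β₁ := by
    have := (lt_div_iff₀ hpos).1 hx.2; linarith
  rw [(hasDerivAt_G β₁ β₂ x).deriv]
  exact mul_pos (mul_pos (by linarith) (by linarith)) (Real.exp_pos _)

theorem G_strictAntiOn :
    StrictAntiOn (G β₁ β₂) (Ici ((β₂ - β₁) / (β₂ * (β₁ + β₂)))) := by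
  have hpos : 0 < β₂ * (β₁ + β₂) := mul_pos (by linarith) hs
  refine strictAntiOn_of_deriv_neg (convex_Ici _) (continuous_G β₁ β₂).continuousOn
    fun x hx => ?_
  rw [interior_Ici] at hx
  have hgt : β₂ - β₁ < x * β₂ * (β₁ + β₂) := by
    have := (div_lt_iff₀ hpos).1 hx; linarith
  rw [(hasDerivAt_G β₁ β₂ x).deriv]
  exact mul_neg_of_neg_of_pos (mul_neg_of_pos_of_neg (by linarith) (by linarith))
    (Real.exp_pos _)

theorem F_strictAntiOn_Icc {x₀ : ℝ} (hG : G β₁ β₂ x₀ = β₁) :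
    StrictAntiOn (F β₁ β₂) (Icc 0 x₀) := by
  refine strictAntiOn_of_deriv_neg (convex_Icc 0 x₀) (continuous_F β₁ β₂).continuousOn
    fun x hx => ?_
  rw [interior_Icc] at hx
  have hGx := apply_lt_of_strictMonoOn_Icc_of_strictAntiOn_Ici (G_strictMonoOn hs h₂)
    (G_strictAntiOn hs h₂) hx.1 hx.2 (hG.trans (G_zero β₁ β₂).symm)
  rw [G_zero] at hGx
  linarith [deriv_F β₁ β₂ x]

end Shape

/-- The derivative `F'_{β₁,β₂}(x) = β₁ − (β₁ + xβ₂(β₁+β₂)) e^{−x(β₁+β₂)}` vanishes at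
exactly one positive point `x₀`, at which `F_{β₁,β₂}(x₀) < 0`; moreover `F' → β₁` at `∞`. -/
theorem first_derivative_critical_point (β₁ β₂ : ℝ) (h₁ : 0 < β₁) (h₂ : β₁ < β₂) :
    (∀ x : ℝ, deriv (F β₁ β₂) x =
      β₁ - (β₁ + x * β₂ * (β₁ + β₂)) * Real.exp (-x * (β₁ + β₂))) ∧
    (∃! x₀ : ℝ, 0 < x₀ ∧ deriv (F β₁ β₂) x₀ = 0) ∧
    (∀ x₀ : ℝ, 0 < x₀ → deriv (F β₁ β₂) x₀ = 0 → F β₁ β₂ x₀ < 0) ∧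
    Filter.Tendsto (deriv (F β₁ β₂)) Filter.atTop (nhds β₁) := by
  have hcrit (x : ℝ) : deriv (F β₁ β₂) x = 0 ↔ G β₁ β₂ x = G β₁ β₂ 0 := by
    rw [deriv_F, G_zero, sub_eq_zero, eq_comm]
  have hs : 0 < β₁ + β₂ := by linarith
  have hc : 0 < (β₂ - β₁) / (β₂ * (β₁ + β₂)) := div_pos (by linarith) (mul_pos (by linarith) hs)
  refine ⟨fun x => (hasDerivAt_F β₁ β₂ x).deriv, ?_, fun x₀ hx₀ hx₀crit => ?_, ?_⟩
  · simpa only [hcrit] using existsUnique_apply_eq_of_strictMonoOn_Icc_of_strictAntiOn_Ici hc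
      (G_strictMonoOn hs h₂) (G_strictAntiOn hs h₂) (continuous_G β₁ β₂).continuousOn
      (tendsto_G_atTop β₁ β₂ hs) (by rwa [G_zero])
  · rw [hcrit, G_zero] at hx₀crit
    simpa only [F_zero] using F_strictAntiOn_Icc hs h₂ hx₀crit (left_mem_Icc.2 hx₀.le)
      (right_mem_Icc.2 hx₀.le) hx₀
  · rw [funext (deriv_F β₁ β₂)]
    simpa using (tendsto_G_atTop β₁ β₂ hs).const_sub β₁
end

section
/- Let 0 < β₁ < β₂ and let a > 0 satisfy F_{β₁,β₂}(a) = 0, and set φ(τ) := (aβ₁ − 1)(e^{aτ} − 1)/a² + τ/a. Then for all u ∈ [0, a(β₁+β₂)], the identity a·φ(β₁+β₂ − u/a) = ((1 + aβ₂)/a)·(e^u − 1)/e^u − u/a holds. -/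
/-! Multiplying `F β₁ β₂ a = 0` by `e^{a(β₁+β₂)}` gives `(aβ₁ - 1) e^{a(β₁+β₂)} = -(1 + aβ₂)`.
Since `e^{a(β₁+β₂-u/a)} = e^{a(β₁+β₂)} e^{-u}`, this turns the exponential term of
`aφ(β₁+β₂-u/a)` into `-(1 + aβ₂) e^{-u} / a`, and the identity is then algebra. -/

open Real

theorem F_eq_zero_iff (β₁ β₂ x : ℝ) :
    F β₁ β₂ x = 0 ↔ (β₁ * x - 1) * exp (x * (β₁ + β₂)) = -(β₂ * x + 1) := by
  have hexp : exp (-x * (β₁ + β₂)) * exp (x * (β₁ + β₂)) = 1 := by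
    rw [← exp_add]; simp
  have hscaled : F β₁ β₂ x * exp (x * (β₁ + β₂)) =
      (β₁ * x - 1) * exp (x * (β₁ + β₂)) + (β₂ * x + 1) := by
    unfold F
    linear_combination (β₂ * x + 1) * hexp
  rw [← mul_left_inj' (exp_ne_zero (x * (β₁ + β₂))), zero_mul, hscaled, add_eq_zero_iff_eq_neg]

theorem profile_identity_u_general (β₁ β₂ a : ℝ)
    (ha : 0 < a) (hz : F β₁ β₂ a = 0)
    (φ : ℝ → ℝ)
    (hφ : ∀ τ, φ τ = (a * β₁ - 1) * (Real.exp (a * τ) - 1) / a ^ 2 + τ / a) :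
    ∀ u ∈ Set.Icc (0 : ℝ) (a * (β₁ + β₂)),
      a * φ (β₁ + β₂ - u / a) =
        ((1 + a * β₂) / a) * ((Real.exp u - 1) / Real.exp u) - u / a := by
  intro u _
  have hroot := (F_eq_zero_iff β₁ β₂ a).1 hz
  have hshift : exp (a * (β₁ + β₂ - u / a)) = exp (a * (β₁ + β₂)) / exp u := by
    rw [← exp_sub]
    field_simp
  rw [hφ, hshift]
  field_simp
  linear_combination hroot

/-- If `a > 0` satisfies `F_{β₁,β₂}(a) = 0` and `φ(τ) = (aβ₁−1)(e^{aτ}−1)/a² + τ/a`, then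
for `u ∈ [0, a(β₁+β₂)]` one has `aφ(β₁+β₂−u/a) = ((1+aβ₂)/a)(eᵘ−1)/eᵘ − u/a`. -/
theorem profile_identity_u (β₁ β₂ a : ℝ) (h₁ : 0 < β₁) (h₂ : β₁ < β₂)
    (ha : 0 < a) (hz : F β₁ β₂ a = 0)
    (φ : ℝ → ℝ)
    (hφ : ∀ τ, φ τ = (a * β₁ - 1) * (Real.exp (a * τ) - 1) / a ^ 2 + τ / a) :
    ∀ u ∈ Set.Icc (0 : ℝ) (a * (β₁ + β₂)),
      a * φ (β₁ + β₂ - u / a) =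
        ((1 + a * β₂) / a) * ((Real.exp u - 1) / Real.exp u) - u / a :=
  profile_identity_u_general β₁ β₂ a ha hz φ hφ
end
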